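/- arXiv:2107.12054 — 2 statements merged into one kernel-verified Lean document; each statement's English description precedes it below -/
import Mathlib

section
/- A lattice point x = (x_{i,k}) ∈ ℤ^N lies in the generalized twisted cube C if and only if there exist integers i_{1,0}, i_{2,0}, …, i_{m,0} such that for every 1 ≤ t ≤ m: (a) ℓ_t + i_{t,0} + Σ_{k=1}^{n_t} x_{t,k} + Σ_{j=t+1}^{m} Σ_{p=1}^{n_j} c_{t,j}^{(p)} x_{j,p} = 0, and (b) sgn(i_{t,0}) = sgn(x_{t,1}) = ⋯ = sgn(x_{t,n_t}). -/
/-!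
Generalized Bott manifold data: `m ≥ 1`, block sizes `n : Fin m → ℕ` (each ≥ 1),
integers `ℓ : Fin m → ℤ` and `c i j k` (used only for `i < j`).
The lattice `ℤ^{N+1}` is realized as functions `((Σ i, Fin (n i)) ⊕ Unit) → ℤ`,
with standard basis `E p`; `E (Sum.inr ())` is `e_{m+1}`.
-/

noncomputable section

namespace GB

variable (m : ℕ) (n : Fin m → ℕ)

/-- The double-index set for the coordinates `x_{i,k}`, `1 ≤ i ≤ m`, `1 ≤ k ≤ n_i`. -/
abbrev J : Type := Σ i : Fin m, Fin (n i)

/-- The lattice `ℤ^{N+1}`. -/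
abbrev L : Type := (J m n ⊕ Unit) → ℤ

/-- Standard basis vector of `ℤ^{N+1}`. -/
def E (p : J m n ⊕ Unit) : L m n := fun q => if q = p then 1 else 0

/-- The basis element `λ^μ` of the group ring `ℤ[ℤ^{N+1}]`. -/
def lam (μ : L m n) : AddMonoidAlgebra ℤ (L m n) := AddMonoidAlgebra.single μ 1

/-- `⟨x, e_i⟩ = Σ_k x_k e_{i,k}`. -/
def emb (i : Fin m) (z : Fin (n i) → ℤ) : L m n :=
  ∑ k : Fin (n i), z k • E m n (Sum.inl ⟨i, k⟩)

variable (ℓ : Fin m → ℤ) (c : (i j : Fin m) → Fin (n j) → ℤ)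

/-- `k_i(μ) = ℓ_i + Σ_{j=i+1}^m Σ_{k=1}^{n_j} c_{i,j}^{(k)} μ_{j,k}`. -/
def kfun (i : Fin m) (μ : L m n) : ℤ :=
  ℓ i + ∑ j : Fin m, ∑ k : Fin (n j), if i < j then c i j k * μ (Sum.inl ⟨j, k⟩) else 0

/-- `Δ⁻_{n,r} = {z ∈ ℤ_{≤0}^n : z_1 + ⋯ + z_n = -r}`. -/
def DeltaMinus (nn : ℕ) (r : ℤ) : Set (Fin nn → ℤ) :=
  {z | (∀ j, z j ≤ 0) ∧ ∑ j, z j = -r}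

/-- `Δ⁺_{n,r} = {z ∈ ℤ_{>0}^n : z_1 + ⋯ + z_n = r - 1}`. -/
def DeltaPlus (nn : ℕ) (r : ℤ) : Set (Fin nn → ℤ) :=
  {z | (∀ j, 0 < z j) ∧ ∑ j, z j = r - 1}

/-- The value of the operator `D_i` on the basis element `λ^μ`. -/
def Dsingle (i : Fin m) (μ : L m n) : AddMonoidAlgebra ℤ (L m n) :=
  if 0 ≤ kfun m n ℓ c i μ then
    ∑ r ∈ Finset.Icc (0 : ℤ) (kfun m n ℓ c i μ),
      ∑ᶠ z ∈ DeltaMinus (n i) r, lam m n (μ + emb m n i z)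
  else if -(n i : ℤ) ≤ kfun m n ℓ c i μ then 0
  else
    ∑ r ∈ Finset.Icc ((n i : ℤ) + 1) (-(kfun m n ℓ c i μ)),
      ∑ᶠ z ∈ DeltaPlus (n i) r, ((-1) ^ (n i) : ℤ) • lam m n (μ + emb m n i z)

/-- The ℤ-linear operator `D_i` on `ℤ[ℤ^{N+1}]`, extending `λ^μ ↦ Dsingle i μ`. -/
def Dop (i : Fin m) (f : AddMonoidAlgebra ℤ (L m n)) : AddMonoidAlgebra ℤ (L m n) :=
  Finsupp.sum f.coeff fun μ a => a • Dsingle m n ℓ c i μ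

/-- `A_i(x)`; for `i = m` the inner sum is empty, so `A_m(x) = -ℓ_m`. -/
def A (x : J m n → ℝ) (i : Fin m) : ℝ :=
  -(ℓ i + ∑ j : Fin m, ∑ k : Fin (n j), if i < j then (c i j k : ℝ) * x ⟨j, k⟩ else 0)

/-- The generalized twisted cube `C ⊆ ℝ^N`. -/
def C : Set (J m n → ℝ) :=
  {x | ∀ i : Fin m,
    (A m n ℓ c x i ≤ ∑ k, x ⟨i, k⟩ ∧ (∑ k, x ⟨i, k⟩) ≤ 0 ∧ ∀ k, x ⟨i, k⟩ ≤ 0) ∨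
    (0 < ∑ k, x ⟨i, k⟩ ∧ (∑ k, x ⟨i, k⟩) < A m n ℓ c x i ∧ ∀ k, 0 < x ⟨i, k⟩)}

/-- `sgn(t) = 1` if `t > 0`, `-1` if `t ≤ 0` (real argument). -/
def sgnR (t : ℝ) : ℤ := if 0 < t then 1 else -1

/-- `sgn(t) = 1` if `t > 0`, `-1` if `t ≤ 0` (integer argument). -/
def sgnZ (t : ℤ) : ℤ := if 0 < t then 1 else -1

open Classical in
/-- The density function `ρ` of the generalized twisted cube. -/
def rho (x : J m n → ℝ) : ℤ :=
  if x ∈ C m n ℓ c then (-1) ^ (∑ i, n i) * ∏ p : J m n, sgnR (x p) else 0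

end GB

end

/-!
On a lattice point all data of the cube condition for block `t` are integers, and the
integer `i_{t,0}` is forced by the linear equation to be the slack `A_t(x) - Σ_k x_{t,k}`.
The two alternatives of the cube condition say exactly that this slack and all `x_{t,k}`
are `≤ 0`, or all `> 0`; the bounds `Σ_k x_{t,k} ≤ 0`, resp. `> 0`, are then automatic
because the block is nonempty.
-/

namespace GB

theorem sgnZ_eq_sgnZ_iff {a b : ℤ} : sgnZ a = sgnZ b ↔ (0 < a ↔ 0 < b) := by
  by_cases ha : 0 < a <;> by_cases hb : 0 < b <;> simp [sgnZ, ha, hb]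

theorem cube_block_iff {ι : Type*} [Fintype ι] [Nonempty ι] (z : ι → ℤ) (a : ℤ) :
    ((a ≤ ∑ k, z k ∧ ∑ k, z k ≤ 0 ∧ ∀ k, z k ≤ 0) ∨
        (0 < ∑ k, z k ∧ ∑ k, z k < a ∧ ∀ k, 0 < z k)) ↔
      ∀ k, sgnZ (a - ∑ k, z k) = sgnZ (z k) := by
  simp only [sgnZ_eq_sgnZ_iff]
  constructor
  · rintro (⟨ha, -, hz⟩ | ⟨-, ha, hz⟩) k
    · exact iff_of_false (by omega) (hz k).not_gt
    · exact iff_of_true (by omega) (hz k)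
  · intro h
    by_cases ha : 0 < a - ∑ k, z k
    · have hz : ∀ k, 0 < z k := fun k => (h k).1 ha
      exact Or.inr ⟨Finset.sum_pos (fun k _ => hz k) Finset.univ_nonempty, by omega, hz⟩
    · have hz : ∀ k, z k ≤ 0 := fun k => not_lt.1 fun hk => ha ((h k).2 hk)
      exact Or.inl ⟨by omega, Finset.sum_nonpos fun k _ => hz k, hz⟩

variable {m : ℕ} {n : Fin m → ℕ} (ℓ : Fin m → ℤ) (c : (i j : Fin m) → Fin (n j) → ℤ)

theorem A_intCast (x : J m n → ℤ) (i : Fin m) :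
    A m n ℓ c (fun p => (x p : ℝ)) i = -(kfun m n ℓ c i (Sum.elim x 0) : ℝ) := by
  simp only [A, kfun, Sum.elim_inl]
  push_cast
  rfl

theorem intCast_mem_C_iff (x : J m n → ℤ) :
    (fun p => (x p : ℝ)) ∈ C m n ℓ c ↔ ∀ t : Fin m,
      let a := -kfun m n ℓ c t (Sum.elim x 0)
      (a ≤ ∑ k, x ⟨t, k⟩ ∧ ∑ k, x ⟨t, k⟩ ≤ 0 ∧ ∀ k, x ⟨t, k⟩ ≤ 0) ∨
        (0 < ∑ k, x ⟨t, k⟩ ∧ ∑ k, x ⟨t, k⟩ < a ∧ ∀ k, 0 < x ⟨t, k⟩) := by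
  simp only [C, Set.mem_ofPred_eq, A_intCast]
  norm_cast

end GB

theorem gbott_lattice_mem_cube_iff_general
    (m : ℕ) (n : Fin m → ℕ) (hn : ∀ i, 1 ≤ n i)
    (ℓ : Fin m → ℤ) (c : (i j : Fin m) → Fin (n j) → ℤ)
    (x : GB.J m n → ℤ) :
    ((fun p => (x p : ℝ)) ∈ GB.C m n ℓ c) ↔
      ∃ i0 : Fin m → ℤ, ∀ t : Fin m,
        (ℓ t + i0 t + ∑ k : Fin (n t), x ⟨t, k⟩ +
            ∑ j : Fin m, ∑ p : Fin (n j), (if t < j then c t j p * x ⟨j, p⟩ else 0) = 0) ∧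
        ∀ k : Fin (n t), GB.sgnZ (i0 t) = GB.sgnZ (x ⟨t, k⟩) := by
  have block (t : Fin m) := by
    haveI : Nonempty (Fin (n t)) := ⟨⟨0, hn t⟩⟩
    exact GB.cube_block_iff (fun k => x ⟨t, k⟩) (-GB.kfun m n ℓ c t (Sum.elim x 0))
  simp only [GB.intCast_mem_C_iff, block]
  simp only [GB.kfun, Sum.elim_inl]
  constructor
  · intro h
    exact ⟨_, fun t => ⟨by ring, h t⟩⟩
  · rintro ⟨i0, h⟩ t
    have hi0 := (h t).1
    convert (h t).2 using 3
    linarith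

/-- A lattice point `x ∈ ℤ^N` lies in the generalized twisted cube `C`
iff there exist integers `i_{1,0}, …, i_{m,0}` such that for every `t`:
`ℓ_t + i_{t,0} + Σ_k x_{t,k} + Σ_{j>t} Σ_p c_{t,j}^{(p)} x_{j,p} = 0` and
`sgn(i_{t,0}) = sgn(x_{t,k})` for all `k`. -/
theorem gbott_lattice_mem_cube_iff
    (m : ℕ) (hm : 1 ≤ m) (n : Fin m → ℕ) (hn : ∀ i, 1 ≤ n i)
    (ℓ : Fin m → ℤ) (c : (i j : Fin m) → Fin (n j) → ℤ)
    (x : GB.J m n → ℤ) :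
    ((fun p => (x p : ℝ)) ∈ GB.C m n ℓ c) ↔
      ∃ i0 : Fin m → ℤ, ∀ t : Fin m,
        (ℓ t + i0 t + ∑ k : Fin (n t), x ⟨t, k⟩ +
            ∑ j : Fin m, ∑ p : Fin (n j), (if t < j then c t j p * x ⟨j, p⟩ else 0) = 0) ∧
        ∀ k : Fin (n t), GB.sgnZ (i0 t) = GB.sgnZ (x ⟨t, k⟩) :=
  gbott_lattice_mem_cube_iff_general m n hn ℓ c x
end

section
/- For every 1 ≤ i ≤ m and every μ ∈ ℤ^{N+1} of the form μ = e_{m+1} + Σ_{j=i+1}^{m} Σ_{k=1}^{n_j} x_{j,k} e_{j,k}, the operator D_i enumerates the i-th block of the generalized twisted cube with its density sign: D_i(λ^μ) = Σ_{x ∈ B_{n_i, k_i(μ)}} ((−1)^{n_i} Π_{k=1}^{n_i} sgn(x_k)) · λ^{μ + ⟨x, e_i⟩}, the sum being over the finite set B_{n_i, k_i(μ)}. -/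
namespace GB

/-- `B_{n,k} = {x ∈ ℤ^n : (−k ≤ Σ x ≤ 0 and all x_j ≤ 0) or (0 < Σ x < −k and all x_j > 0)}`. -/
def Bset (nn : ℕ) (k : ℤ) : Set (Fin nn → ℤ) :=
  {x | (-k ≤ ∑ j, x j ∧ (∑ j, x j) ≤ 0 ∧ ∀ j, x j ≤ 0) ∨
       (0 < ∑ j, x j ∧ (∑ j, x j) < -k ∧ ∀ j, 0 < x j)}

end GB

/-!
For `k ≥ 0` the set `B_{n,k}` is the disjoint union of the simplices `Δ⁻_{n,r}`, `0 ≤ r ≤ k`;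
for `k < -n` it is the disjoint union of the `Δ⁺_{n,r}`, `n + 1 ≤ r ≤ -k`; otherwise it is empty,
since a positive vector has coordinate sum at least `n`. On `Δ⁻` every `sgn` is `-1`, so the density
sign is `(-1)^n (-1)^n = 1`, while on `Δ⁺` it is `(-1)^n`: exactly the coefficients in `D_i(λ^μ)`.
-/

namespace GB

open Function

theorem Dop_lam (m : ℕ) (n : Fin m → ℕ) (ℓ : Fin m → ℤ) (c : (i j : Fin m) → Fin (n j) → ℤ)
    (i : Fin m) (μ : L m n) : Dop m n ℓ c i (lam m n μ) = Dsingle m n ℓ c i μ := by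
  rw [Dop, lam, AddMonoidAlgebra.coeff_single, Finsupp.sum_single_index (by rw [zero_smul]),
    one_smul]

variable {nn : ℕ}

theorem natCast_le_sum_of_pos {z : Fin nn → ℤ} (h : ∀ j, 0 < z j) : (nn : ℤ) ≤ ∑ j, z j := by
  simpa using Finset.card_nsmul_le_sum Finset.univ z 1 fun j _ => h j

theorem deltaMinus_finite (r : ℤ) : (DeltaMinus nn r).Finite := by
  refine (Set.Finite.pi fun _ : Fin nn => Set.finite_Icc (-r) 0).subset ?_
  rintro z ⟨hz, hsum⟩ j -
  have : -z j ≤ ∑ k, -z k :=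
    Finset.single_le_sum (f := fun k => -z k) (fun k _ => neg_nonneg.2 (hz k)) (Finset.mem_univ j)
  rw [Finset.sum_neg_distrib, hsum] at this
  exact ⟨by linarith, hz j⟩

theorem deltaPlus_finite (r : ℤ) : (DeltaPlus nn r).Finite := by
  refine (Set.Finite.pi fun _ : Fin nn => Set.finite_Icc 1 (r - 1)).subset ?_
  rintro z ⟨hz, hsum⟩ j -
  exact ⟨hz j, hsum ▸ Finset.single_le_sum (fun k _ => (hz k).le) (Finset.mem_univ j)⟩

theorem pairwise_disjoint_deltaMinus : Pairwise (Disjoint on (DeltaMinus nn)) := fun _ _ hrs =>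
  Set.disjoint_left.2 fun _ hr hs => hrs (neg_injective (hr.2.symm.trans hs.2))

theorem pairwise_disjoint_deltaPlus : Pairwise (Disjoint on (DeltaPlus nn)) := fun _ _ hrs =>
  Set.disjoint_left.2 fun _ hr hs => hrs (by linarith [hr.2, hs.2])

theorem bset_eq_biUnion_deltaMinus {K : ℤ} (hK : 0 ≤ K) :
    Bset nn K = ⋃ r ∈ (Finset.Icc 0 K : Set ℤ), DeltaMinus nn r := by
  ext z
  simp only [Bset, DeltaMinus, Set.mem_ofPred_eq, Set.mem_iUnion, Finset.coe_Icc, Set.mem_Icc,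
    exists_prop]
  constructor
  · rintro (⟨hlo, hhi, hz⟩ | ⟨hpos, hlt, -⟩)
    · exact ⟨-∑ j, z j, ⟨by omega, by omega⟩, hz, by ring⟩
    · omega
  · rintro ⟨r, ⟨hr, hrK⟩, hz, hsum⟩
    exact Or.inl ⟨by omega, by omega, hz⟩

theorem bset_eq_biUnion_deltaPlus (hnn : 1 ≤ nn) {K : ℤ} (hK : K < -nn) :
    Bset nn K = ⋃ r ∈ (Finset.Icc ((nn : ℤ) + 1) (-K) : Set ℤ), DeltaPlus nn r := by
  ext z
  simp only [Bset, DeltaPlus, Set.mem_ofPred_eq, Set.mem_iUnion, Finset.coe_Icc, Set.mem_Icc,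
    exists_prop]
  constructor
  · rintro (⟨hlo, hhi, -⟩ | ⟨hpos, hlt, hz⟩)
    · omega
    · have := natCast_le_sum_of_pos hz
      exact ⟨∑ j, z j + 1, ⟨by omega, by omega⟩, hz, by ring⟩
  · rintro ⟨r, ⟨hr, hrK⟩, hz, hsum⟩
    exact Or.inr ⟨by omega, by omega, hz⟩

theorem bset_eq_empty {K : ℤ} (hK : K < 0) (hK' : -(nn : ℤ) ≤ K) : Bset nn K = ∅ := by
  refine Set.eq_empty_of_forall_notMem ?_
  rintro z (⟨hlo, hhi, -⟩ | ⟨-, hlt, hz⟩)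
  · omega
  · have := natCast_le_sum_of_pos hz
    omega

section Finsum

variable {M : Type*} [AddCommMonoid M] (f : (Fin nn → ℤ) → M)

theorem finsum_mem_bset_of_nonneg {K : ℤ} (hK : 0 ≤ K) :
    ∑ᶠ z ∈ Bset nn K, f z = ∑ r ∈ Finset.Icc 0 K, ∑ᶠ z ∈ DeltaMinus nn r, f z := by
  rw [bset_eq_biUnion_deltaMinus hK,
    finsum_mem_biUnion (pairwise_disjoint_deltaMinus.set_pairwise _) (Finset.finite_toSet _)
      fun r _ => deltaMinus_finite r,
    finsum_mem_coe_finset]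

theorem finsum_mem_bset_of_lt_neg (hnn : 1 ≤ nn) {K : ℤ} (hK : K < -nn) :
    ∑ᶠ z ∈ Bset nn K, f z =
      ∑ r ∈ Finset.Icc ((nn : ℤ) + 1) (-K), ∑ᶠ z ∈ DeltaPlus nn r, f z := by
  rw [bset_eq_biUnion_deltaPlus hnn hK,
    finsum_mem_biUnion (pairwise_disjoint_deltaPlus.set_pairwise _) (Finset.finite_toSet _)
      fun r _ => deltaPlus_finite r,
    finsum_mem_coe_finset]

end Finsum

theorem prod_sgnZ_of_nonpos {z : Fin nn → ℤ} (hz : ∀ k, z k ≤ 0) :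
    ∏ k, sgnZ (z k) = (-1) ^ nn := by
  simp [sgnZ, not_lt.2 (hz _)]

theorem prod_sgnZ_of_pos {z : Fin nn → ℤ} (hz : ∀ k, 0 < z k) : ∏ k, sgnZ (z k) = 1 := by
  simp [sgnZ, hz]

end GB

theorem gbott_Dop_eq_block_sum_general
    (m : ℕ) (n : Fin m → ℕ) (hn : ∀ i, 1 ≤ n i)
    (ℓ : Fin m → ℤ) (c : (i j : Fin m) → Fin (n j) → ℤ)
    (i : Fin m)
    (μ : GB.L m n) :
    GB.Dop m n ℓ c i (GB.lam m n μ) =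
      ∑ᶠ z ∈ GB.Bset (n i) (GB.kfun m n ℓ c i μ),
        ((-1) ^ (n i) * ∏ k : Fin (n i), GB.sgnZ (z k)) •
          GB.lam m n (μ + GB.emb m n i z) := by
  rw [GB.Dop_lam]
  unfold GB.Dsingle
  split_ifs with hK hK'
  · rw [GB.finsum_mem_bset_of_nonneg _ hK]
    refine Finset.sum_congr rfl fun r _ => finsum_mem_congr rfl fun z hz => ?_
    rw [GB.prod_sgnZ_of_nonpos hz.1, ← pow_add, Even.neg_one_pow ⟨_, rfl⟩, one_smul]
  · rw [GB.bset_eq_empty (by omega) hK', finsum_mem_empty]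
  · rw [GB.finsum_mem_bset_of_lt_neg _ (hn i) (by omega)]
    refine Finset.sum_congr rfl fun r _ => finsum_mem_congr rfl fun z hz => ?_
    rw [GB.prod_sgnZ_of_pos hz.1, mul_one]

/-- For `μ = e_{m+1} + Σ_{j>i} Σ_k x_{j,k} e_{j,k}`, the operator `D_i`
enumerates the `i`-th block of the generalized twisted cube with its density sign:
`D_i(λ^μ) = Σ_{z ∈ B_{n_i, k_i(μ)}} ((−1)^{n_i} Π_k sgn(z_k)) λ^{μ + ⟨z, e_i⟩}`. -/
theorem gbott_Dop_eq_block_sum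
    (m : ℕ) (hm : 1 ≤ m) (n : Fin m → ℕ) (hn : ∀ i, 1 ≤ n i)
    (ℓ : Fin m → ℤ) (c : (i j : Fin m) → Fin (n j) → ℤ)
    (i : Fin m) (x : (j : Fin m) → Fin (n j) → ℤ)
    (μ : GB.L m n)
    (hμ : μ = GB.E m n (Sum.inr ()) +
        ∑ j : Fin m, ∑ k : Fin (n j),
          (if i < j then x j k else 0) • GB.E m n (Sum.inl ⟨j, k⟩)) :
    GB.Dop m n ℓ c i (GB.lam m n μ) =
      ∑ᶠ z ∈ GB.Bset (n i) (GB.kfun m n ℓ c i μ),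
        ((-1) ^ (n i) * ∏ k : Fin (n i), GB.sgnZ (z k)) •
          GB.lam m n (μ + GB.emb m n i z) :=
  gbott_Dop_eq_block_sum_general m n hn ℓ c i μ
end
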